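/- arXiv:2004.01688 — 2 statements merged into one kernel-verified Lean document; each statement's English description precedes it below -/
import Mathlib

section
/- Let C be a well-fibered topological construct, I a full subcategory closed under the relevant structure, and X an object of C. Suppose h : X' → X is a morphism in the fibre of the forgetful functor at UX (i.e., U h is the identity) with X' an I-generated object. Then X' is the coreflection of X into the category of I-generated objects if and only if for every object C₀ in I, composition with h induces a bijection Hom(C₀, X') → Hom(C₀, X). -/
open CategoryTheory

universe v₁ u₁ u

variable {C : Type u₁} [Category.{v₁} C]

/-- Initial lifts for a faithful functor (see Definition of topological functor). -/
def HasInitialLift (U : C ⥤ Type u) {ι : Type (max u₁ v₁ (u + 1))}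
    (a : Type u) (t : ι → C) (f : ∀ i, a ⟶ U.obj (t i)) : Prop :=
  ∃ (s : C) (hs : U.obj s = a) (m : ∀ i, s ⟶ t i),
    (∀ i, U.map (m i) = eqToHom hs ≫ f i) ∧
    ∀ (s' : C) (g : U.obj s' ⟶ a) (m' : ∀ i, s' ⟶ t i),
      (∀ i, U.map (m' i) = g ≫ f i) →
      ∃! n : s' ⟶ s, U.map n = g ≫ eqToHom hs.symm

/-- A topological construct: a faithful functor to `Set` admitting all initial lifts. -/
def IsTopologicalConstruct (U : C ⥤ Type u) : Prop :=
  U.Faithful ∧ ∀ {ι : Type (max u₁ v₁ (u + 1))} (a : Type u) (t : ι → C)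
    (f : ∀ i, a ⟶ U.obj (t i)), HasInitialLift U a t f

/-- A topological construct is well-fibered if it is fibre-small and has discrete
terminal object (the fibre over a one-point set is trivial). -/
def IsWellFibered (U : C ⥤ Type u) : Prop :=
  (∀ a : Type u, Small.{u} {s : C // U.obj s = a}) ∧
    (∀ s s' : C, U.obj s = PUnit.{u + 1} → U.obj s' = PUnit.{u + 1} → s = s')

/-- `X` is `I`-generated: the sink of all morphisms from objects of `I` to `X` is a
final lift of its underlying family of maps. -/
def IsGeneratedBy (U : C ⥤ Type u) (I : Set C) (X : C) : Prop :=
  ∀ (Y : C) (g : U.obj X ⟶ U.obj Y),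
    (∀ c : C, c ∈ I → ∀ α : c ⟶ X, ∃ m : c ⟶ Y, U.map m = U.map α ≫ g) →
    ∃ m : X ⟶ Y, U.map m = g

/-- `h : X' ⟶ X` exhibits `X'` as the coreflection of `X` into the full subcategory of
`I`-generated objects. -/
def IsCoreflectionOf (U : C ⥤ Type u) (I : Set C) {X' X : C} (h : X' ⟶ X) : Prop :=
  IsGeneratedBy U I X' ∧
    ∀ (Z : C), IsGeneratedBy U I Z → ∀ f : Z ⟶ X, ∃! f' : Z ⟶ X', f' ≫ h = f

/-- **Characterisation of the coreflection into `I`-generated objects.**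
Let `U : C ⥤ Set` be a well-fibered topological construct, `I` a full subcategory and
`X` an object. If `h : X' ⟶ X` is a morphism in the fibre of `U` at `U X` (i.e. `U h`
is the identity) with `X'` an `I`-generated object, then `X'` (via `h`) is the
coreflection of `X` into the category of `I`-generated objects if and only if for
every `C₀ ∈ I`, composition with `h` induces a bijection
`Hom(C₀, X') → Hom(C₀, X)`. -/
theorem coreflection_iff_hom_bijective
    (U : C ⥤ Type u) (htop : IsTopologicalConstruct U) (hwf : IsWellFibered U)
    (I : Set C) {X' X : C} (h : X' ⟶ X)
    (hfib : U.obj X' = U.obj X) (hmap : U.map h = eqToHom hfib)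
    (hgen : IsGeneratedBy U I X') :
    IsCoreflectionOf U I h ↔
      ∀ c : C, c ∈ I → Function.Bijective (fun f : c ⟶ X' => f ≫ h) := by
  obtain ⟨hfaith, -⟩ := htop
  have hmono : ∀ {Z : C} (f₁ f₂ : Z ⟶ X'), f₁ ≫ h = f₂ ≫ h → f₁ = f₂ := by
    intro Z f₁ f₂ he
    apply hfaith.map_injective
    have h1 := congrArg U.map he
    simp only [U.map_comp, hmap] at h1
    have h2 := congrArg (fun k => k ≫ eqToHom hfib.symm) h1
    simpa using h2
  constructor
  · rintro ⟨-, huniv⟩ c hc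
    constructor
    · intro f₁ f₂ he
      exact hmono f₁ f₂ he
    · intro f
      have hcgen : IsGeneratedBy U I c := by
        intro Y g hsink
        obtain ⟨m, hm⟩ := hsink c hc (𝟙 c)
        exact ⟨m, by simpa using hm⟩
      obtain ⟨f', hf', -⟩ := huniv c hcgen f
      exact ⟨f', hf'⟩
  · intro hbij
    refine ⟨hgen, fun Z hZ f => ?_⟩
    have hsink : ∀ c : C, c ∈ I → ∀ α : c ⟶ Z, ∃ m : c ⟶ X',
        U.map m = U.map α ≫ (U.map f ≫ eqToHom hfib.symm) := by
      intro c hc α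
      obtain ⟨m, hm⟩ := (hbij c hc).2 (α ≫ f)
      refine ⟨m, ?_⟩
      have h1 := congrArg U.map hm
      simp only [U.map_comp, hmap] at h1
      calc U.map m = (U.map m ≫ eqToHom hfib) ≫ eqToHom hfib.symm := by simp
        _ = U.map α ≫ U.map f ≫ eqToHom hfib.symm := by rw [h1]; simp
    obtain ⟨m, hm⟩ := hZ X' (U.map f ≫ eqToHom hfib.symm) hsink
    have hmc : m ≫ h = f := by
      apply hfaith.map_injective
      simp [U.map_comp, hmap, hm]
    exact ⟨m, hmc, fun y hy => hmono y m (by rw [hy, hmc])⟩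
end

section
/- A topological space X is exponentiable in Top (i.e., the functor (−) × X has a right adjoint) if and only if X is core-compact. -/
open CategoryTheory TopologicalSpace

universe u

/-- `U` is way below `V`: every open cover of `V` contains a finite subcover of `U`. -/
def WayBelow {X : Type u} [TopologicalSpace X] (U V : Set X) : Prop :=
  ∀ S : Set (Set X), (∀ s ∈ S, IsOpen s) → V ⊆ ⋃₀ S →
    ∃ T ⊆ S, T.Finite ∧ U ⊆ ⋃₀ T

/-- A space is core-compact if every open neighbourhood of a point contains an open
neighbourhood way below it. -/
def CoreCompact (X : Type u) [TopologicalSpace X] : Prop :=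
  ∀ (x : X) (V : Set X), IsOpen V → x ∈ V →
    ∃ U : Set X, IsOpen U ∧ x ∈ U ∧ WayBelow U V

/-- The functor `(−) × X` on the category of all topological spaces. -/
def prodWithFunctor (X : TopCat.{u}) : TopCat.{u} ⥤ TopCat.{u} where
  obj Y := TopCat.of (Y × X)
  map {Y Z} f := TopCat.ofHom (f.hom.prodMap (ContinuousMap.id X))
  map_id := by intro Y; ext p <;> rfl
  map_comp := by intros; ext p <;> rfl

/-!
For core-compact `X`, give `C(X, Y)` the topology generated by the sets `{f | U ⋐ f ⁻¹' V}`.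
Evaluation is continuous because `U ⋐ V` forces `U ⊆ V`, and currying is continuous by
interpolation `U ⋐ U' ⋐ V` together with a tube lemma in which `⋐` replaces compactness.

Conversely, if `E = 𝕊 ^ X` exists (`𝕊` the Sierpiński space), open subsets of `Z × X` are
pulled back along `g × id` from one open `W ⊆ E × X`. For `x ∈ V`, take a box `N × U ∋ (e_V, x)`
inside `W`, where `e_V` classifies `V`. Given an open cover `𝒮` of `V`, make `Set X` a space whose
only non-isolated point is `V`, the limit of the finite unions of `𝒮`; there `x ∈ interior A` is an
open relation. Its classifying map sends `V` to `e_V`, hence some finite union into `N`, and that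
finite union then contains `U`.
-/

open Filter Set Topology

section WayBelow

variable {X : Type u} [TopologicalSpace X] {U U' V V' : Set X}

theorem WayBelow.subset (h : WayBelow U V) (hV : IsOpen V) : U ⊆ V := by
  obtain ⟨T, hT, -, hUT⟩ := h {V} (by simpa using hV) (by simp)
  exact hUT.trans (sUnion_subset_iff.2 fun t ht => (hT ht).le)

theorem WayBelow.mono_left (h : WayBelow U V) (hU : U' ⊆ U) : WayBelow U' V :=
  fun S hS hVS => (h S hS hVS).imp fun _ ⟨hTS, hT, hUT⟩ => ⟨hTS, hT, hU.trans hUT⟩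

theorem WayBelow.mono_right (h : WayBelow U V) (hV : V ⊆ V') : WayBelow U V' :=
  fun S hS hVS => h S hS (hV.trans hVS)

theorem wayBelow_sUnion {T : Set (Set X)} (hT : T.Finite) (h : ∀ A ∈ T, WayBelow A V) :
    WayBelow (⋃₀ T) V := by
  intro S hS hVS
  choose! F hFS hF hAF using fun A hA => h A hA S hS hVS
  refine ⟨⋃ A ∈ T, F A, iUnion₂_subset hFS, hT.biUnion hF, sUnion_subset fun A hA => ?_⟩
  exact (hAF A hA).trans (sUnion_mono (subset_biUnion_of_mem hA))

theorem CoreCompact.exists_wayBelow_wayBelow (hX : CoreCompact X) (hV : IsOpen V)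
    (h : WayBelow U V) : ∃ W, IsOpen W ∧ WayBelow U W ∧ WayBelow W V := by
  let S := {A | IsOpen A ∧ ∃ B, IsOpen B ∧ WayBelow A B ∧ WayBelow B V}
  have hVS : V ⊆ ⋃₀ S := fun x hx => by
    obtain ⟨B, hB, hxB, hBV⟩ := hX x V hV hx
    obtain ⟨A, hA, hxA, hAB⟩ := hX x B hB hxB
    exact ⟨A, ⟨hA, B, hB, hAB, hBV⟩, hxA⟩
  obtain ⟨T, hTS, hT, hUT⟩ := h S (fun A hA => hA.1) hVS
  choose! B hB hAB hBV using fun A (hA : A ∈ S) => hA.2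
  refine ⟨⋃ A ∈ T, B A, isOpen_biUnion fun A hA => hB A (hTS hA), ?_, ?_⟩
  · refine (wayBelow_sUnion hT fun A hA => ?_).mono_left hUT
    exact (hAB A (hTS hA)).mono_right (subset_biUnion_of_mem hA)
  · simpa only [sUnion_image] using
      wayBelow_sUnion (hT.image B) (forall_mem_image.2 fun A hA => hBV A (hTS hA))

theorem WayBelow.exists_mem_nhds_prod_subset {Z : Type*} [TopologicalSpace Z]
    {O : Set (Z × X)} (hO : IsOpen O) {z : Z} (h : WayBelow U {x | (z, x) ∈ O}) :
    ∃ N ∈ 𝓝 z, N ×ˢ U ⊆ O := by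
  let S := {A | IsOpen A ∧ ∃ N ∈ 𝓝 z, N ×ˢ A ⊆ O}
  have hOS : {x | (z, x) ∈ O} ⊆ ⋃₀ S := fun x hx => by
    obtain ⟨N, A, hN, hA, hzN, hxA, hNA⟩ := isOpen_prod_iff.1 hO z x hx
    exact ⟨A, ⟨hA, N, hN.mem_nhds hzN, hNA⟩, hxA⟩
  obtain ⟨T, hTS, hT, hUT⟩ := h S (fun A hA => hA.1) hOS
  choose! N hN hNA using fun A (hA : A ∈ S) => hA.2
  refine ⟨⋂ A ∈ T, N A, (biInter_mem hT).2 fun A hA => hN A (hTS hA), ?_⟩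
  rintro ⟨z', x⟩ ⟨hz', hx⟩
  obtain ⟨A, hA, hxA⟩ := hUT hx
  exact hNA A (hTS hA) ⟨mem_iInter₂.1 hz' A hA, hxA⟩

end WayBelow

/-- `C(X, Y)` with the topology generated by the sets `{f | U ⋐ f ⁻¹' V}`; for core-compact `X`
it is the exponential `Y ^ X`. -/
def WayBelowMap (X Y : Type u) [TopologicalSpace X] [TopologicalSpace Y] : Type u := C(X, Y)

namespace WayBelowMap

variable {X Y Z : Type u} [TopologicalSpace X] [TopologicalSpace Y] [TopologicalSpace Z]

instance : FunLike (WayBelowMap X Y) X Y := inferInstanceAs (FunLike C(X, Y) X Y)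

instance : ContinuousMapClass (WayBelowMap X Y) X Y :=
  inferInstanceAs (ContinuousMapClass C(X, Y) X Y)

def mk (f : C(X, Y)) : WayBelowMap X Y := f

instance : TopologicalSpace (WayBelowMap X Y) :=
  generateFrom
    {s | ∃ U V, IsOpen U ∧ IsOpen V ∧ s = {f : WayBelowMap X Y | WayBelow U (f ⁻¹' V)}}

theorem isOpen_setOf_wayBelow {U : Set X} {V : Set Y} (hU : IsOpen U) (hV : IsOpen V) :
    IsOpen {f : WayBelowMap X Y | WayBelow U (f ⁻¹' V)} :=
  GenerateOpen.basic _ ⟨U, V, hU, hV, rfl⟩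

theorem continuous_eval (hX : CoreCompact X) :
    Continuous fun p : WayBelowMap X Y × X => p.1 p.2 := by
  refine continuous_def.2 fun V hV => isOpen_prod_iff.2 fun f x hfx => ?_
  obtain ⟨U, hU, hxU, hUV⟩ := hX x _ (hV.preimage (map_continuous f)) hfx
  exact ⟨_, U, isOpen_setOf_wayBelow hU hV, hU, hUV, hxU,
    fun p ⟨hp, hx⟩ => WayBelow.subset hp (hV.preimage (map_continuous p.1)) hx⟩

theorem continuous_curry (hX : CoreCompact X) (h : C(Z × X, Y)) :
    Continuous fun z => mk (h.curry z) := by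
  refine continuous_generateFrom_iff.2 ?_
  rintro _ ⟨U, V, hU, hV, rfl⟩
  refine isOpen_iff_mem_nhds.2 fun z hz => ?_
  obtain ⟨U', -, hUU', hU'V⟩ :=
    hX.exists_wayBelow_wayBelow (hV.preimage (map_continuous (h.curry z))) hz
  obtain ⟨N, hN, hNU'⟩ := hU'V.exists_mem_nhds_prod_subset (hV.preimage h.continuous)
  exact mem_of_superset hN fun z' hz' => hUU'.mono_right fun x hx => hNU' ⟨hz', hx⟩

def curryEquiv (hX : CoreCompact X) : C(Z × X, Y) ≃ C(Z, WayBelowMap X Y) where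
  toFun h := ⟨fun z => mk (h.curry z), continuous_curry hX h⟩
  invFun g :=
    ⟨fun p => g p.1 p.2, (continuous_eval hX).comp (g.continuous.prodMap continuous_id)⟩
  left_inv _ := rfl
  right_inv _ := rfl

end WayBelowMap

theorem isLeftAdjoint_prodWithFunctor_of_coreCompact {X : TopCat.{u}} (hX : CoreCompact X) :
    (prodWithFunctor X).IsLeftAdjoint :=
  (Adjunction.adjunctionOfEquivRight (F := prodWithFunctor X)
    (G_obj := fun Y : TopCat.{u} => TopCat.of (WayBelowMap X Y))
    (fun _ _ =>
      { toFun f := TopCat.ofHom (WayBelowMap.curryEquiv hX f.hom)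
        invFun g := TopCat.ofHom ((WayBelowMap.curryEquiv hX).symm g.hom)
        left_inv _ := rfl
        right_inv _ := rfl })
    (fun _ _ _ _ _ => rfl)).isLeftAdjoint

def sierpinski : TopCat.{u} := TopCat.of (ULift.{u} Prop)

theorem exists_open_classifier_of_isLeftAdjoint {X : TopCat.{u}}
    (h : (prodWithFunctor X).IsLeftAdjoint) :
    ∃ (E : TopCat.{u}) (W : Set (E × X)), IsOpen W ∧
      Function.Injective (fun e : E => {x | (e, x) ∈ W}) ∧
      ∀ (Z : TopCat.{u}) (O : Set (Z × X)), IsOpen O →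
        ∃ g : Z → E, Continuous g ∧ ∀ z x, (g z, x) ∈ W ↔ (z, x) ∈ O := by
  obtain ⟨R, ⟨adj⟩⟩ := h.exists_rightAdjoint
  let W : Set (R.obj sierpinski × X) := {p | (adj.counit.app sierpinski p).down}
  have hW : ∀ {Z : TopCat.{u}} (g : Z ⟶ R.obj sierpinski) (p : Z × X),
      ((adj.homEquiv Z sierpinski).symm g p).down ↔ (g p.1, p.2) ∈ W := by
    intro Z g p
    rw [adj.homEquiv_counit]
    rfl
  have hW_open : IsOpen W :=
    ((isOpen_iff_continuous_mem.2 continuous_id).preimage continuous_uliftDown).preimage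
      (adj.counit.app sierpinski).hom.continuous
  refine ⟨R.obj sierpinski, W, hW_open, fun e e' hee => ?_, fun Z O hO => ?_⟩
  · let c (e : R.obj sierpinski) : TopCat.of PUnit.{u + 1} ⟶ R.obj sierpinski :=
      TopCat.ofHom (ContinuousMap.const _ e)
    have hc : (adj.homEquiv _ sierpinski).symm (c e) = (adj.homEquiv _ sierpinski).symm (c e') := by
      ext p
      exact ULift.ext _ _ <| propext <|
        (hW (c e) p).trans <| (Set.ext_iff.1 hee p.2).trans (hW (c e') p).symm
    exact ConcreteCategory.congr_hom ((adj.homEquiv _ sierpinski).symm.injective hc) PUnit.unit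
  · let χ : (prodWithFunctor X).obj Z ⟶ sierpinski :=
      TopCat.ofHom
        ⟨fun p => ULift.up (p ∈ O), continuous_uliftUp.comp (isOpen_iff_continuous_mem.1 hO)⟩
    refine ⟨adj.homEquiv Z sierpinski χ, (adj.homEquiv Z sierpinski χ).hom.continuous,
      fun z x => ?_⟩
    rw [← hW _ (z, x), Equiv.symm_apply_apply]
    rfl

/-- `Set X` with `V` as its only non-isolated point, approached by the finite unions of `𝒮`. -/
def CoverSpace {X : Type u} (_V : Set X) (_𝒮 : Set (Set X)) : Type u := Set X

namespace CoverSpace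

variable {X : Type u} {V : Set X} {𝒮 : Set (Set X)}

instance : TopologicalSpace (CoverSpace V 𝒮) := nhdsAdjoint V (⨅ s ∈ 𝒮, 𝓟 {A | s ⊆ A})

theorem isOpen_iff {G : Set (CoverSpace V 𝒮)} :
    IsOpen G ↔ (V ∈ G → G ∈ ⨅ s ∈ 𝒮, 𝓟 {A : Set X | s ⊆ A}) :=
  Iff.rfl

theorem exists_finite_sUnion_mem {G : Set (CoverSpace V 𝒮)} (hG : IsOpen G) (hVG : V ∈ G) :
    ∃ T ⊆ 𝒮, T.Finite ∧ ⋃₀ T ∈ G := by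
  obtain ⟨T, hT, hT𝒮, hTG⟩ := mem_biInf_principal.1 (isOpen_iff.1 hG hVG)
  exact ⟨T, hT𝒮, hT, hTG (mem_iInter₂.2 fun s hs => subset_sUnion_of_mem hs)⟩

variable [TopologicalSpace X]

theorem isOpen_setOf_mem_interior (hV : IsOpen V) (h𝒮 : ∀ s ∈ 𝒮, IsOpen s)
    (hV𝒮 : V ⊆ ⋃₀ 𝒮) : IsOpen {p : CoverSpace V 𝒮 × X | p.2 ∈ interior p.1} := by
  refine isOpen_prod_iff.2 fun A x hx => ?_
  by_cases hA : A = V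
  · have hxV : x ∈ V := by simpa [hA, hV.interior_eq] using hx
    obtain ⟨s, hs𝒮, hxs⟩ := hV𝒮 hxV
    refine ⟨insert A {B | s ⊆ B}, s ∩ V, isOpen_iff.2 fun _ => ?_, (h𝒮 s hs𝒮).inter hV,
      mem_insert _ _, ⟨hxs, hxV⟩, ?_⟩
    · exact mem_of_superset (mem_iInf_of_mem s (mem_iInf_of_mem hs𝒮 (mem_principal_self _)))
        (subset_insert _ _)
    rintro ⟨B, y⟩ ⟨hB | hsB, hys, hyV⟩
    · rwa [mem_ofPred_eq, hB, hA, hV.interior_eq]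
    · exact interior_maximal hsB (h𝒮 s hs𝒮) hys
  · refine ⟨{A}, interior A, isOpen_singleton_nhdsAdjoint _ hA, isOpen_interior, rfl, hx, ?_⟩
    rintro ⟨B, y⟩ ⟨rfl, hy⟩
    exact hy

end CoverSpace

theorem coreCompact_of_isLeftAdjoint {X : TopCat.{u}} (h : (prodWithFunctor X).IsLeftAdjoint) :
    CoreCompact X := by
  obtain ⟨E, W, hW, hslice, hclass⟩ := exists_open_classifier_of_isLeftAdjoint h
  intro x V hV hxV
  obtain ⟨e, -, he⟩ := hclass (TopCat.of PUnit) (univ ×ˢ V) (isOpen_univ.prod hV)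
  obtain ⟨N, U, hN, hU, heN, hxU, hNU⟩ :=
    isOpen_prod_iff.1 hW (e ⟨⟩) x ((he _ _).2 ⟨trivial, hxV⟩)
  refine ⟨U, hU, hxU, fun 𝒮 h𝒮 hV𝒮 => ?_⟩
  obtain ⟨g, hg, hgW⟩ := hclass (TopCat.of (CoverSpace V 𝒮)) _
    (CoverSpace.isOpen_setOf_mem_interior hV h𝒮 hV𝒮)
  have hgV : g V = e ⟨⟩ := hslice <| Set.ext fun y =>
    (hgW V y).trans <| by simp [he, hV.interior_eq]
  obtain ⟨T, hT𝒮, hT, hTN⟩ := CoverSpace.exists_finite_sUnion_mem (hN.preimage hg)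
    (show g V ∈ N from hgV ▸ heN)
  exact ⟨T, hT𝒮, hT, fun y hy => interior_subset ((hgW _ y).1 (hNU ⟨hTN, hy⟩))⟩

/-- **Exponentiable spaces are exactly the core-compact ones.** A topological space `X`
is exponentiable in the category of all topological spaces (the functor `(−) × X` has a
right adjoint) if and only if `X` is core-compact. -/
theorem exponentiable_iff_coreCompact (X : TopCat.{u}) :
    (prodWithFunctor X).IsLeftAdjoint ↔ CoreCompact X :=
  ⟨coreCompact_of_isLeftAdjoint, isLeftAdjoint_prodWithFunctor_of_coreCompact⟩
end
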